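/- arXiv:math/0602505 — 6 statements merged into one kernel-verified Lean document; each statement's English description precedes it below -/
import Mathlib

section
/- If θ, θ̃ ∈ (0, 1/2], then D(θ‖θ̃) ≥ (θ−θ̃)² / (2·θ*(1−θ*)), where θ* = max{θ, θ̃} (the element of {θ, θ̃} closer to 1/2). -/
/-!
As a function of its second argument, `D(θ‖s)` vanishes at `s = θ` and has derivative
`(s - θ) / (s (1 - s))`, while `(θ - s)² / (2c)` vanishes there too and has derivative
`(s - θ) / c`. If `s (1 - s) ≤ c` between `θ` and `θ̃`, the difference of the two derivatives has
the sign of `s - θ`, so moving `s` from `θ` to `θ̃` can only increase the difference of the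
functions. On `(0, 1/2]` the map `s ↦ s (1 - s)` is increasing, so `c = θ* (1 - θ*)` works.
-/

noncomputable def klBern (θ θt : ℝ) : ℝ :=
  θ * Real.log (θ / θt) + (1 - θ) * Real.log ((1 - θ) / (1 - θt))

open Set

lemma apply_le_apply_of_sub_mul_deriv_nonneg {f f' : ℝ → ℝ} {a b : ℝ}
    (hf : ∀ x ∈ uIcc a b, HasDerivAt f (f' x) x) (hf' : ∀ x ∈ uIcc a b, 0 ≤ (x - a) * f' x) :
    f a ≤ f b := by
  have hcont : ContinuousOn f (uIcc a b) := fun x hx => (hf x hx).continuousAt.continuousWithinAt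
  have hderiv : ∀ x ∈ interior (uIcc a b), HasDerivWithinAt f (f' x) (interior (uIcc a b)) x :=
    fun x hx => (hf x (interior_subset hx)).hasDerivWithinAt
  rcases le_total a b with hab | hba
  · refine monotoneOn_of_hasDerivWithinAt_nonneg (convex_uIcc a b) hcont hderiv (fun x hx => ?_)
      left_mem_uIcc right_mem_uIcc hab
    have hxa : 0 < x - a := by
      rw [uIcc_of_le hab, interior_Icc] at hx
      linarith [hx.1]
    exact (mul_nonneg_iff_of_pos_left hxa).1 (hf' x (interior_subset hx))
  · refine antitoneOn_of_hasDerivWithinAt_nonpos (convex_uIcc a b) hcont hderiv (fun x hx => ?_)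
      right_mem_uIcc left_mem_uIcc hba
    have hxa : x - a < 0 := by
      rw [uIcc_of_ge hba, interior_Icc] at hx
      linarith [hx.2]
    exact nonpos_of_mul_nonneg_right (hf' x (interior_subset hx)) hxa

@[simp]
lemma klBern_self (θ : ℝ) : klBern θ θ = 0 := by
  simp [klBern]

lemma hasDerivAt_klBern_right {θ s : ℝ} (hθ₀ : θ ≠ 0) (hθ₁ : θ ≠ 1) (hs₀ : s ≠ 0) (hs₁ : s ≠ 1) :
    HasDerivAt (klBern θ) ((s - θ) / (s * (1 - s))) s := by
  have h1s : 1 - s ≠ 0 := sub_ne_zero.2 (Ne.symm hs₁)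
  have h1θ : 1 - θ ≠ 0 := sub_ne_zero.2 (Ne.symm hθ₁)
  have hleft : HasDerivAt (fun y => θ / y) (-(θ / s ^ 2)) s := by
    simpa [div_eq_mul_inv] using (hasDerivAt_inv hs₀).const_mul θ
  have hright : HasDerivAt (fun y => (1 - θ) / (1 - y)) ((1 - θ) / (1 - s) ^ 2) s := by
    simpa [div_eq_mul_inv] using
      ((hasDerivAt_inv h1s).comp s ((hasDerivAt_id s).const_sub 1)).const_mul (1 - θ)
  refine ((hleft.log (div_ne_zero hθ₀ hs₀)).const_mul θ |>.add
    ((hright.log (div_ne_zero h1θ h1s)).const_mul (1 - θ))).congr_deriv ?_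
  field_simp
  ring

theorem sq_sub_div_le_klBern {θ θt c : ℝ} (hθ : θ ∈ Ioo 0 1) (hθt : θt ∈ Ioo 0 1)
    (hc : ∀ s ∈ uIcc θ θt, s * (1 - s) ≤ c) :
    (θ - θt) ^ 2 / (2 * c) ≤ klBern θ θt := by
  have hmem : uIcc θ θt ⊆ Ioo 0 1 := ordConnected_Ioo.uIcc_subset hθ hθt
  have hvar (s : ℝ) (hs : s ∈ uIcc θ θt) : 0 < s * (1 - s) := by
    obtain ⟨hs₀, hs₁⟩ := hmem hs
    exact mul_pos hs₀ (sub_pos.2 hs₁)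
  have hc₀ : 0 < c := (hvar θ left_mem_uIcc).trans_le (hc θ left_mem_uIcc)
  have hderiv (s : ℝ) (hs : s ∈ uIcc θ θt) :
      HasDerivAt (fun s => klBern θ s - (θ - s) ^ 2 / (2 * c))
        ((s - θ) / (s * (1 - s)) - (s - θ) / c) s := by
    obtain ⟨hs₀, hs₁⟩ := hmem hs
    refine ((hasDerivAt_klBern_right hθ.1.ne' hθ.2.ne hs₀.ne' hs₁.ne).sub
      ((((hasDerivAt_id' s).const_sub θ).pow 2).div_const (2 * c))).congr_deriv ?_
    field_simp
    ring
  have hsign (s : ℝ) (hs : s ∈ uIcc θ θt) :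
      0 ≤ (s - θ) * ((s - θ) / (s * (1 - s)) - (s - θ) / c) := by
    have hinv : 1 / c ≤ 1 / (s * (1 - s)) := one_div_le_one_div_of_le (hvar s hs) (hc s hs)
    calc (0 : ℝ) ≤ (s - θ) ^ 2 * (1 / (s * (1 - s)) - 1 / c) :=
          mul_nonneg (sq_nonneg _) (sub_nonneg.2 hinv)
      _ = (s - θ) * ((s - θ) / (s * (1 - s)) - (s - θ) / c) := by ring
  simpa using apply_le_apply_of_sub_mul_deriv_nonneg hderiv hsign

theorem kl_lower_bound_near_boundary (θ θt : ℝ)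
    (hθ : θ ∈ Set.Ioc (0:ℝ) (1/2)) (hθt : θt ∈ Set.Ioc (0:ℝ) (1/2)) :
    klBern θ θt ≥ (θ - θt) ^ 2 / (2 * max θ θt * (1 - max θ θt)) := by
  have hmax : max θ θt ≤ 1 / 2 := max_le hθ.2 hθt.2
  have hvar (s : ℝ) (hs : s ∈ uIcc θ θt) : s * (1 - s) ≤ max θ θt * (1 - max θ θt) := by
    have hs_le : s ≤ max θ θt := hs.2
    nlinarith
  rw [mul_assoc]
  exact sq_sub_div_le_klBern ⟨hθ.1, by linarith [hθ.2]⟩ ⟨hθt.1, by linarith [hθt.2]⟩ hvar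
end

section
/- If 0 < θ ≤ 1/2 and j ≥ 1 is a natural number, then D(θ‖1−2^{−j}) ≤ j. -/
theorem kl_to_one_minus (θ : ℝ) (j : ℕ) (h0 : 0 < θ) (h1 : θ ≤ 1/2) (hj : 1 ≤ j) :
    klBern θ (1 - 2 ^ (-(j:ℤ))) ≤ j := by
  have ht : (2:ℝ) ^ (-(j:ℤ)) = ((2:ℝ) ^ j)⁻¹ := by
    rw [zpow_neg, zpow_natCast]
  have h2jpos : (0:ℝ) < 2 ^ j := by positivity
  have h2j : (2:ℝ) ≤ 2 ^ j := by
    calc (2:ℝ) = 2 ^ 1 := (pow_one 2).symm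
    _ ≤ 2 ^ j := by apply pow_le_pow_right₀ (by norm_num) hj
  have htle : ((2:ℝ) ^ j)⁻¹ ≤ 1/2 := by
    rw [inv_le_comm₀ (by positivity) (by norm_num)]
    simpa using h2j
  have hθ1 : θ < 1 := lt_of_le_of_lt h1 (by norm_num)
  unfold klBern
  rw [ht]
  have key1 : θ * Real.log (θ / (1 - ((2:ℝ)^j)⁻¹)) ≤ 0 := by
    apply mul_nonpos_of_nonneg_of_nonpos h0.le
    apply Real.log_nonpos
    · exact div_nonneg h0.le (by linarith)
    · rw [div_le_one (by linarith)]
      linarith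
  have key2 : (1 - θ) * Real.log ((1 - θ) / (1 - (1 - ((2:ℝ)^j)⁻¹))) ≤ j := by
    have hsimp : (1 : ℝ) - (1 - ((2:ℝ)^j)⁻¹) = ((2:ℝ)^j)⁻¹ := by ring
    rw [hsimp, div_eq_mul_inv, inv_inv]
    have harg : (1:ℝ) ≤ (1 - θ) * 2 ^ j := by
      calc (1:ℝ) = (1/2) * 2 := by norm_num
      _ ≤ (1 - θ) * 2 ^ j := by
        apply mul_le_mul (by linarith) h2j (by norm_num) (by linarith)
    have hlog : Real.log ((1 - θ) * 2 ^ j) ≤ j := by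
      calc Real.log ((1 - θ) * 2 ^ j) ≤ Real.log (2 ^ j) := by
            gcongr
            nlinarith
      _ = j * Real.log 2 := by rw [Real.log_pow]
      _ ≤ j * 1 := by
            apply mul_le_mul_of_nonneg_left _ (by positivity)
            have := Real.log_two_lt_d9
            linarith
      _ = j := mul_one _
    calc (1 - θ) * Real.log ((1 - θ) * 2 ^ j) ≤ 1 * Real.log ((1 - θ) * 2 ^ j) := by
          apply mul_le_mul_of_nonneg_right (by linarith)
          exact Real.log_nonneg harg
    _ ≤ j := by simpa using hlog
  linarith
end

section
/- Let θ₀ ∈ (0,1), n ≥ 2, 1 ≤ k ≤ n−1, and α = k/n. Then the binomial probability satisfies C(n,k)·θ₀^k·(1−θ₀)^{n−k} ≤ (2π·α(1−α)·n)^{−1/2} · exp(−n·D(α‖θ₀)). -/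
open Real Nat Set Stirling

lemma stirlingSeq_antitoneOn : AntitoneOn stirlingSeq (Ici 1) := by
  rintro (_ | i) hi (_ | j) hj hij
  · simp at hi
  · simp at hi
  · simp at hj
  · exact stirlingSeq'_antitone (by omega)

theorem choose_add_le (k m : ℕ) (hk : k ≠ 0) (hm : m ≠ 0) :
    ((k + m).choose k : ℝ) ≤
      √((k + m) / (2 * π * k * m)) * (((k + m) / k) ^ k * ((k + m) / m) ^ m) := by
  have hupper : stirlingSeq (k + m) ≤ stirlingSeq k :=
    stirlingSeq_antitoneOn (by simp; omega) (by simp; omega) (by omega)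
  unfold stirlingSeq at hupper
  rw [div_le_div_iff₀ (by positivity) (by positivity)] at hupper
  push_cast at hupper
  have hlower := le_factorial_stirling m
  have hchoose : ((k + m).choose k : ℝ) * (k ! * m !) = (k + m) ! := by
    have h := Nat.choose_mul_factorial_mul_factorial (Nat.le_add_right k m)
    rw [Nat.add_sub_cancel_left, mul_assoc] at h
    exact_mod_cast h
  have hrhs : √((k + m) / (2 * π * k * m)) * (((k + m) / k) ^ k * ((k + m) / m) ^ m) =
      (√(2 * (k + m)) * ((k + m) / exp 1) ^ (k + m)) /
        ((√(2 * k) * (k / exp 1) ^ k) * (√(2 * π * m) * (m / exp 1) ^ m)) := by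
    have hsqrt : √((k + m) / (2 * π * k * m)) = √(2 * (k + m)) / (√(2 * k) * √(2 * π * m)) := by
      rw [← sqrt_mul (by positivity), ← sqrt_div' _ (by positivity)]
      congr 1
      field_simp
    rw [hsqrt, pow_add]
    simp only [div_pow]
    field_simp
  rw [hrhs, le_div_iff₀ (by positivity),
    ← mul_le_mul_iff_of_pos_right (a := (k ! * m ! : ℝ)) (by positivity)]
  calc _ = (k + m) ! * (√(2 * k) * (k / exp 1) ^ k) * (√(2 * π * m) * (m / exp 1) ^ m) := by
        rw [← hchoose]; ring
    _ ≤ k ! * (√(2 * (k + m)) * ((k + m) / exp 1) ^ (k + m)) * m ! := by gcongr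
    _ = _ := by ring

lemma exp_neg_mul_klBern {θ : ℝ} (hθ : θ ∈ Ioo 0 1) {k m : ℕ} (hk : k ≠ 0) (hm : m ≠ 0) :
    exp (-(k + m : ℝ) * klBern (k / (k + m)) θ) =
      (θ * (k + m) / k) ^ k * ((1 - θ) * (k + m) / m) ^ m := by
  obtain ⟨hθ0, hθ1⟩ := hθ
  have hθ1' : 0 < 1 - θ := sub_pos.mpr hθ1
  have hcompl : 1 - (k : ℝ) / (k + m) = m / (k + m) := by field_simp; ring
  have hlog_k : log (k / (k + m) / θ) = -log (θ * (k + m) / k) := by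
    rw [← log_inv, inv_div, div_div, mul_comm θ]
  have hlog_m : log (m / (k + m) / (1 - θ)) = -log ((1 - θ) * (k + m) / m) := by
    rw [← log_inv, inv_div, div_div, mul_comm (1 - θ)]
  have hexponent : -(k + m : ℝ) * klBern (k / (k + m)) θ =
      k * log (θ * (k + m) / k) + m * log ((1 - θ) * (k + m) / m) := by
    rw [klBern, hcompl, hlog_k, hlog_m]
    field_simp
    ring
  rw [hexponent, exp_add, exp_nat_mul, exp_nat_mul, exp_log (by positivity),
    exp_log (by positivity)]

theorem binomial_upper_bound_general (θ₀ : ℝ) (hθ₀ : θ₀ ∈ Set.Ioo (0:ℝ) 1)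
    (n k : ℕ) (hk : 1 ≤ k) (hk' : k ≤ n - 1) :
    (n.choose k : ℝ) * θ₀ ^ k * (1 - θ₀) ^ (n - k) ≤
      (1 / Real.sqrt (2 * Real.pi * ((k:ℝ)/n) * (1 - (k:ℝ)/n) * n)) *
        Real.exp (-(n:ℝ) * klBern ((k:ℝ)/n) θ₀) := by
  obtain ⟨m, rfl⟩ : ∃ m, n = k + m := ⟨n - k, by omega⟩
  have hk0 : k ≠ 0 := by omega
  have hm0 : m ≠ 0 := by omega
  have hvariance : 1 / √(2 * π * (k / (k + m)) * (1 - k / (k + m)) * (k + m)) =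
      √((k + m) / (2 * π * k * m)) := by
    rw [one_div, ← sqrt_inv]
    congr 1
    have hcompl : 1 - (k : ℝ) / (k + m) = m / (k + m) := by field_simp; ring
    rw [hcompl]
    field_simp
  rw [Nat.add_sub_cancel_left]
  push_cast
  rw [hvariance, exp_neg_mul_klBern hθ₀ hk0 hm0]
  calc ((k + m).choose k : ℝ) * θ₀ ^ k * (1 - θ₀) ^ m
      = ((k + m).choose k : ℝ) * (θ₀ ^ k * (1 - θ₀) ^ m) := mul_assoc _ _ _
    _ ≤ (√((k + m) / (2 * π * k * m)) * (((k + m) / k) ^ k * ((k + m) / m) ^ m)) *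
          (θ₀ ^ k * (1 - θ₀) ^ m) :=
        mul_le_mul_of_nonneg_right (choose_add_le k m hk0 hm0)
          (mul_nonneg (pow_nonneg hθ₀.1.le k) (pow_nonneg (sub_nonneg.mpr hθ₀.2.le) m))
    _ = _ := by rw [mul_div_assoc, mul_div_assoc, mul_pow, mul_pow]; ring

theorem binomial_upper_bound (θ₀ : ℝ) (hθ₀ : θ₀ ∈ Set.Ioo (0:ℝ) 1)
    (n k : ℕ) (hn : 2 ≤ n) (hk : 1 ≤ k) (hk' : k ≤ n - 1) :
    (n.choose k : ℝ) * θ₀ ^ k * (1 - θ₀) ^ (n - k) ≤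
      (1 / Real.sqrt (2 * Real.pi * ((k:ℝ)/n) * (1 - (k:ℝ)/n) * n)) *
        Real.exp (-(n:ℝ) * klBern ((k:ℝ)/n) θ₀) :=
  binomial_upper_bound_general θ₀ hθ₀ n k hk hk'
end

section
/- For every real z > 0: √π/(2z³) − 1/(z√(2e)) ≤ Σ_{n=1}^∞ √n · exp(−z²n) ≤ √π/(2z³) + 1/(z√(2e)). -/
/-!
`f t = √t * exp (-z² t)` rises on `[0, m]` and falls on `[m, ∞)`, where `m = 1 / (2 z²)`; its
peak value is `f m = 1 / (z √(2e))` and `∫₀^∞ f = Γ(3/2) / z³ = √π / (2 z³)`. For any unimodal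
nonnegative `f`, comparing `f (n + 1)` with `∫ₙⁿ⁺¹ f` on each unit interval, the errors telescope
separately on the rising and on the falling part, and the one interval containing the peak costs
at most `f m`; hence `|∑ₙ f (n + 1) - ∫₀^∞ f| ≤ f m`.
-/

open Real MeasureTheory Set Filter Topology

section SumIntegral

variable {f : ℝ → ℝ} {x₀ : ℝ} {a : ℕ}

theorem MonotoneOn.sum_le_integral_add_sub (hf : MonotoneOn f (Icc x₀ (x₀ + a))) :
    ∑ i ∈ Finset.range a, f (x₀ + ↑(i + 1)) ≤ (∫ x in x₀..x₀ + a, f x) + f (x₀ + a) - f x₀ := by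
  have h := hf.sum_le_integral
  have h₁ := Finset.sum_range_succ' (fun i : ℕ => f (x₀ + i)) a
  have h₂ := Finset.sum_range_succ (fun i : ℕ => f (x₀ + i)) a
  simp only [Nat.cast_zero, add_zero] at h₁
  linarith

theorem AntitoneOn.integral_le_sum_add_sub (hf : AntitoneOn f (Icc x₀ (x₀ + a))) :
    ∫ x in x₀..x₀ + a, f x ≤ ∑ i ∈ Finset.range a, f (x₀ + ↑(i + 1)) + f x₀ - f (x₀ + a) := by
  have h := hf.integral_le_sum
  have h₁ := Finset.sum_range_succ' (fun i : ℕ => f (x₀ + i)) a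
  have h₂ := Finset.sum_range_succ (fun i : ℕ => f (x₀ + i)) a
  simp only [Nat.cast_zero, add_zero] at h₁
  linarith

theorem MonotoneOn.abs_sum_range_sub_integral_le {N : ℕ} (hf : MonotoneOn f (Icc 0 N))
    (hf₀ : 0 ≤ f 0) : |∑ i ∈ Finset.range N, f (i + 1) - ∫ t in (0 : ℝ)..N, f t| ≤ f N := by
  have hf' : MonotoneOn f (Icc 0 (0 + N)) := by simpa using hf
  have h₁ := hf'.integral_le_sum
  have h₂ := hf'.sum_le_integral_add_sub
  push_cast at h₁ h₂
  simp only [zero_add] at h₁ h₂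
  rw [abs_le]
  constructor <;> linarith

end SumIntegral

section Ioi

variable {f : ℝ → ℝ} {a : ℝ}

theorem MeasureTheory.IntegrableOn.intervalIntegrable_of_Ioi (hf : IntegrableOn f (Ioi a)) {x y : ℝ}
    (hx : a ≤ x) (hy : a ≤ y) : IntervalIntegrable f volume x y :=
  intervalIntegrable_iff.2 <| hf.mono_set fun _ ht => (le_min hx hy).trans_lt ht.1

theorem intervalIntegral_le_setIntegral_Ioi (hf : IntegrableOn f (Ioi a))
    (hf₀ : ∀ t, a < t → 0 ≤ f t) {x : ℝ} (hx : a ≤ x) :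
    ∫ t in a..x, f t ≤ ∫ t in Ioi a, f t := by
  rw [intervalIntegral.integral_of_le hx]
  exact setIntegral_mono_set hf ((ae_restrict_iff' measurableSet_Ioi).2 (.of_forall hf₀))
    Ioc_subset_Ioi_self.eventuallyLE

end Ioi

section Unimodal

variable {f : ℝ → ℝ} {m : ℝ}

theorem le_apply_of_unimodal (hmono : MonotoneOn f (Icc 0 m)) (hanti : AntitoneOn f (Ici m))
    (hm : 0 ≤ m) {t : ℝ} (ht : 0 ≤ t) : f t ≤ f m := by
  rcases le_total t m with htm | hmt
  · exact hmono ⟨ht, htm⟩ ⟨hm, le_rfl⟩ htm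
  · exact hanti self_mem_Ici hmt hmt

theorem min_le_of_unimodal (hmono : MonotoneOn f (Icc 0 m)) (hanti : AntitoneOn f (Ici m))
    {x y t : ℝ} (hx : 0 ≤ x) (hxm : x ≤ m) (hmy : m ≤ y) (ht : t ∈ Icc x y) :
    min (f x) (f y) ≤ f t := by
  rcases le_total t m with htm | hmt
  · exact (min_le_left _ _).trans (hmono ⟨hx, hxm⟩ ⟨hx.trans ht.1, htm⟩ ht.1)
  · exact (min_le_right _ _).trans (hanti hmt hmy ht.2)

theorem integral_le_of_unimodal (hmono : MonotoneOn f (Icc 0 m)) (hanti : AntitoneOn f (Ici m))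
    (hm : 0 ≤ m) (hint : IntegrableOn f (Ioi 0)) {x : ℝ} (hx : 0 ≤ x) :
    ∫ t in x..x + 1, f t ≤ f m := by
  simpa using intervalIntegral.integral_mono_on (b := x + 1) (by linarith)
    (hint.intervalIntegrable_of_Ioi hx (by linarith)) intervalIntegrable_const
    fun t ht => le_apply_of_unimodal hmono hanti hm (hx.trans ht.1)

theorem add_le_add_integral_of_unimodal (hmono : MonotoneOn f (Icc 0 m))
    (hanti : AntitoneOn f (Ici m)) (hint : IntegrableOn f (Ioi 0)) {x : ℝ} (hx : 0 ≤ x)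
    (hxm : x ≤ m) (hmx : m ≤ x + 1) :
    f x + f (x + 1) ≤ f m + ∫ t in x..x + 1, f t := by
  have hm : 0 ≤ m := hx.trans hxm
  have hmin : min (f x) (f (x + 1)) ≤ ∫ t in x..x + 1, f t := by
    simpa using intervalIntegral.integral_mono_on (b := x + 1) (by linarith)
      intervalIntegrable_const (hint.intervalIntegrable_of_Ioi hx (by linarith))
      fun t ht => min_le_of_unimodal hmono hanti hx hxm hmx ht
  have hmax : max (f x) (f (x + 1)) ≤ f m :=
    max_le (le_apply_of_unimodal hmono hanti hm hx)
      (le_apply_of_unimodal hmono hanti hm (by linarith))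
  linarith [min_add_max (f x) (f (x + 1))]

theorem abs_sum_range_add_sub_integral_le_of_unimodal (hmono : MonotoneOn f (Icc 0 m))
    (hanti : AntitoneOn f (Ici m)) (hf : ∀ t, 0 ≤ t → 0 ≤ f t) (hint : IntegrableOn f (Ioi 0))
    {k : ℕ} (hkm : k ≤ m) (hmk : m ≤ k + 1) (a : ℕ) :
    |∑ i ∈ Finset.range (k + 1 + a), f (i + 1) - ∫ t in (0 : ℝ)..↑(k + 1 + a), f t| ≤ f m := by
  have hsum : ∑ i ∈ Finset.range (k + 1 + a), f (i + 1) =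
      ∑ i ∈ Finset.range k, f (i + 1) + f (k + 1) + ∑ i ∈ Finset.range a, f (k + 1 + ↑(i + 1)) := by
    rw [Finset.sum_range_add, Finset.sum_range_succ]
    push_cast
    simp only [add_assoc]
  have hsplit : ∫ t in (0 : ℝ)..↑(k + 1 + a), f t = (∫ t in (0 : ℝ)..k, f t) +
      (∫ t in (k : ℝ)..k + 1, f t) + ∫ t in (k + 1 : ℝ)..k + 1 + a, f t := by
    push_cast
    rw [intervalIntegral.integral_add_adjacent_intervals,
      intervalIntegral.integral_add_adjacent_intervals] <;>
      apply hint.intervalIntegrable_of_Ioi <;> positivity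
  have hrise : MonotoneOn f (Icc 0 (0 + k)) := hmono.mono (Icc_subset_Icc le_rfl (by simpa))
  have hfall : AntitoneOn f (Icc (k + 1) (k + 1 + a)) := hanti.mono fun t ht => hmk.trans ht.1
  have h₁ := hrise.integral_le_sum
  have h₂ := hrise.sum_le_integral_add_sub
  have h₃ := hfall.sum_le_integral
  have h₄ := hfall.integral_le_sum_add_sub
  push_cast at h₁ h₂
  simp only [zero_add] at h₁ h₂
  have hpeak := add_le_add_integral_of_unimodal hmono hanti hint k.cast_nonneg hkm hmk
  have hpeak' := integral_le_of_unimodal hmono hanti (k.cast_nonneg.trans hkm) hint k.cast_nonneg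
  have hf₀ := hf 0 le_rfl
  have hfN := hf (k + 1 + a) (by positivity)
  rw [hsum, hsplit, abs_le]
  constructor <;> linarith

theorem abs_sum_range_sub_integral_le_of_unimodal (hmono : MonotoneOn f (Icc 0 m))
    (hanti : AntitoneOn f (Ici m)) (hm : 0 ≤ m) (hf : ∀ t, 0 ≤ t → 0 ≤ f t)
    (hint : IntegrableOn f (Ioi 0)) (N : ℕ) :
    |∑ i ∈ Finset.range N, f (i + 1) - ∫ t in (0 : ℝ)..N, f t| ≤ f m := by
  rcases le_or_gt N ⌊m⌋₊ with hN | hN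
  · have hNm : (N : ℝ) ≤ m := (Nat.cast_le.2 hN).trans (Nat.floor_le hm)
    exact (MonotoneOn.abs_sum_range_sub_integral_le (hmono.mono (Icc_subset_Icc le_rfl hNm))
      (hf 0 le_rfl)).trans (le_apply_of_unimodal hmono hanti hm N.cast_nonneg)
  · obtain ⟨a, rfl⟩ : ∃ a, N = ⌊m⌋₊ + 1 + a := ⟨N - (⌊m⌋₊ + 1), by omega⟩
    exact abs_sum_range_add_sub_integral_le_of_unimodal hmono hanti hf hint (Nat.floor_le hm)
      (Nat.lt_floor_add_one m).le a

theorem summable_of_unimodal (hmono : MonotoneOn f (Icc 0 m)) (hanti : AntitoneOn f (Ici m))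
    (hm : 0 ≤ m) (hf : ∀ t, 0 ≤ t → 0 ≤ f t) (hint : IntegrableOn f (Ioi 0)) :
    Summable fun n : ℕ => f (n + 1) := by
  refine summable_of_sum_range_le (c := f m + ∫ t in Ioi 0, f t) (fun n => hf _ (by positivity))
    fun N => ?_
  have := abs_le.1 (abs_sum_range_sub_integral_le_of_unimodal hmono hanti hm hf hint N)
  have := intervalIntegral_le_setIntegral_Ioi hint (fun t ht => hf t ht.le) N.cast_nonneg
  linarith

theorem abs_tsum_sub_integral_le_of_unimodal (hmono : MonotoneOn f (Icc 0 m))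
    (hanti : AntitoneOn f (Ici m)) (hm : 0 ≤ m) (hf : ∀ t, 0 ≤ t → 0 ≤ f t)
    (hint : IntegrableOn f (Ioi 0)) :
    |∑' n : ℕ, f (n + 1) - ∫ t in Ioi 0, f t| ≤ f m := by
  have hsum := (summable_of_unimodal hmono hanti hm hf hint).hasSum.tendsto_sum_nat
  have hlim := intervalIntegral_tendsto_integral_Ioi 0 hint tendsto_natCast_atTop_atTop
  exact le_of_tendsto' (hsum.sub hlim).abs
    (abs_sum_range_sub_integral_le_of_unimodal hmono hanti hm hf hint)

end Unimodal

section SqrtMulExp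

variable {c : ℝ}

theorem hasDerivAt_mul_exp_neg_mul (b t : ℝ) :
    HasDerivAt (fun t => t * exp (-b * t)) ((1 - b * t) * exp (-b * t)) t :=
  ((hasDerivAt_id' t).fun_mul ((hasDerivAt_id' t).const_mul (-b)).exp).congr_deriv (by ring)

theorem monotoneOn_mul_exp_neg_mul {b : ℝ} (hb : 0 < b) :
    MonotoneOn (fun t => t * exp (-b * t)) (Iic b⁻¹) := by
  refine monotoneOn_of_deriv_nonneg (convex_Iic _) (by fun_prop)
    (fun t _ => (hasDerivAt_mul_exp_neg_mul b t).differentiableAt.differentiableWithinAt)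
    fun t ht => ?_
  rw [interior_Iic, mem_Iio] at ht
  have hbt : b * t < 1 := by simpa [hb.ne'] using mul_lt_mul_of_pos_left ht hb
  rw [(hasDerivAt_mul_exp_neg_mul b t).deriv]
  exact mul_nonneg (by linarith) (exp_pos _).le

theorem antitoneOn_mul_exp_neg_mul {b : ℝ} (hb : 0 < b) :
    AntitoneOn (fun t => t * exp (-b * t)) (Ici b⁻¹) := by
  refine antitoneOn_of_deriv_nonpos (convex_Ici _) (by fun_prop)
    (fun t _ => (hasDerivAt_mul_exp_neg_mul b t).differentiableAt.differentiableWithinAt)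
    fun t ht => ?_
  rw [interior_Ici, mem_Ioi, inv_lt_iff_one_lt_mul₀' hb] at ht
  rw [(hasDerivAt_mul_exp_neg_mul b t).deriv]
  exact mul_nonpos_of_nonpos_of_nonneg (by linarith) (exp_pos _).le

theorem sqrt_mul_exp_neg_mul_eq_sqrt (c : ℝ) {t : ℝ} (ht : 0 ≤ t) :
    √t * exp (-c * t) = √(t * exp (-(2 * c) * t)) := by
  rw [sqrt_mul ht, ← exp_half]; ring_nf

theorem monotoneOn_sqrt_mul_exp_neg_mul (hc : 0 < c) :
    MonotoneOn (fun t => √t * exp (-c * t)) (Icc 0 (2 * c)⁻¹) := by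
  intro s hs t ht hst
  simp only [sqrt_mul_exp_neg_mul_eq_sqrt c hs.1, sqrt_mul_exp_neg_mul_eq_sqrt c ht.1]
  exact sqrt_le_sqrt (monotoneOn_mul_exp_neg_mul (by positivity) hs.2 ht.2 hst)

theorem antitoneOn_sqrt_mul_exp_neg_mul (hc : 0 < c) :
    AntitoneOn (fun t => √t * exp (-c * t)) (Ici (2 * c)⁻¹) := by
  have hm : 0 ≤ (2 * c)⁻¹ := by positivity
  intro s hs t ht hst
  simp only [sqrt_mul_exp_neg_mul_eq_sqrt c (hm.trans hs),
    sqrt_mul_exp_neg_mul_eq_sqrt c (hm.trans ht)]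
  exact sqrt_le_sqrt (antitoneOn_mul_exp_neg_mul (by positivity) hs ht hst)

theorem integrableOn_sqrt_mul_exp_neg_mul (hc : 0 < c) :
    IntegrableOn (fun t => √t * exp (-c * t)) (Ioi 0) := by
  simpa [sqrt_eq_rpow] using
    integrableOn_rpow_mul_exp_neg_mul_rpow (s := 1 / 2) (p := 1) (by norm_num) one_pos hc

theorem integral_sqrt_mul_exp_neg_mul (hc : 0 < c) :
    ∫ t in Ioi 0, √t * exp (-c * t) = √π / (2 * c ^ (3 / 2 : ℝ)) := by
  have hΓ : Gamma (3 / 2) = √π / 2 := by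
    rw [show (3 / 2 : ℝ) = 1 / 2 + 1 by norm_num, Gamma_add_one (by norm_num), Gamma_one_half_eq]
    ring
  calc ∫ t in Ioi 0, √t * exp (-c * t) = ∫ t in Ioi 0, t ^ ((3 / 2 : ℝ) - 1) * exp (-(c * t)) := by
        congr 1; ext t; rw [sqrt_eq_rpow, neg_mul]; norm_num
    _ = (1 / c) ^ (3 / 2 : ℝ) * Gamma (3 / 2) := integral_rpow_mul_exp_neg_mul_Ioi (by norm_num) hc
    _ = √π / (2 * c ^ (3 / 2 : ℝ)) := by rw [hΓ, div_rpow zero_le_one hc.le, one_rpow]; ring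

end SqrtMulExp

theorem sqrt_exp_sum_estimate (z : ℝ) (hz : 0 < z) :
    Real.sqrt Real.pi / (2 * z ^ 3) - 1 / (z * Real.sqrt (2 * Real.exp 1)) ≤
      (∑' n : ℕ, Real.sqrt (n + 1) * Real.exp (-z ^ 2 * (n + 1))) ∧
    (∑' n : ℕ, Real.sqrt (n + 1) * Real.exp (-z ^ 2 * (n + 1))) ≤
      Real.sqrt Real.pi / (2 * z ^ 3) + 1 / (z * Real.sqrt (2 * Real.exp 1)) := by
  have hc : 0 < z ^ 2 := by positivity
  have hintegral : ∫ t in Ioi 0, √t * exp (-z ^ 2 * t) = √π / (2 * z ^ 3) := by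
    rw [integral_sqrt_mul_exp_neg_mul hc, ← rpow_natCast, ← rpow_mul hz.le]
    norm_num
  have hpeak : √(2 * z ^ 2)⁻¹ * exp (-z ^ 2 * (2 * z ^ 2)⁻¹) = 1 / (z * √(2 * exp 1)) := by
    rw [show -z ^ 2 * (2 * z ^ 2)⁻¹ = -(1 / 2) by field_simp, exp_neg, exp_half, sqrt_inv,
      sqrt_mul zero_le_two, sqrt_mul zero_le_two, sqrt_sq hz.le]
    field_simp
  have key := abs_tsum_sub_integral_le_of_unimodal (monotoneOn_sqrt_mul_exp_neg_mul hc)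
    (antitoneOn_sqrt_mul_exp_neg_mul hc) (by positivity) (fun t _ => by positivity)
    (integrableOn_sqrt_mul_exp_neg_mul hc)
  rw [hintegral, hpeak, abs_sub_le_iff] at key
  constructor <;> linarith [key.1, key.2]
end

section
/- In the interval construction, for every k ≥ 1: (i) J_k has length 2^{−k}; (ii) the distance from θ₀ to I_k is at least 2^{−k−2}; (iii) every θ ∈ I_k satisfies |θ − θ₀| ≤ 2^{−k+1}; (iv) the distance between J_{k+5} and I_k is at least 15·2^{−k−6}. -/
/-- Left endpoint of the interval `J_k` in the interval construction for `θ₀`. -/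
noncomputable def Jleft (θ₀ : ℝ) : ℕ → ℝ
  | 0 => 0
  | k + 1 =>
    let l := Jleft θ₀ k
    let d := (2:ℝ) ^ (-(k:ℤ))          -- length of J_k
    if θ₀ < l + 3 * d / 8 then l       -- l-step
    else if θ₀ < l + 5 * d / 8 then l + d / 4  -- c-step
    else l + d / 2                     -- r-step

/-- The interval `J_k`. -/
noncomputable def Jset (θ₀ : ℝ) (k : ℕ) : Set ℝ :=
  Set.Ico (Jleft θ₀ k) (Jleft θ₀ k + (2:ℝ) ^ (-(k:ℤ)))

/-- The set `I_k = J_{k-1} \ J_k` (for `k ≥ 1`). -/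
noncomputable def Iset (θ₀ : ℝ) (k : ℕ) : Set ℝ :=
  Jset θ₀ (k - 1) \ Jset θ₀ k

lemma Jleft_succ (θ₀ : ℝ) (n : ℕ) :
    Jleft θ₀ (n+1) =
      if θ₀ < Jleft θ₀ n + 3 * (2:ℝ)^(-(n:ℤ)) / 8 then Jleft θ₀ n
      else if θ₀ < Jleft θ₀ n + 5 * (2:ℝ)^(-(n:ℤ)) / 8 then Jleft θ₀ n + (2:ℝ)^(-(n:ℤ)) / 4
      else Jleft θ₀ n + (2:ℝ)^(-(n:ℤ)) / 2 := rfl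

lemma two_zpow_pos (a : ℤ) : (0:ℝ) < (2:ℝ)^a := by positivity

lemma zpow_neg_succ (m : ℕ) : (2:ℝ)^(-((m+1:ℕ)):ℤ) = (2:ℝ)^(-(m:ℤ))/2 := by
  rw [show (-((m+1:ℕ)):ℤ) = -(m:ℤ) + (-1) by push_cast; ring, zpow_add₀ (by norm_num : (2:ℝ) ≠ 0), zpow_neg_one]
  ring

lemma Jleft_step_mono (θ₀ : ℝ) (n : ℕ) : Jleft θ₀ n ≤ Jleft θ₀ (n+1) := by
  have hE := two_zpow_pos (-(n:ℤ))
  rw [Jleft_succ]; split_ifs <;> linarith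

lemma Jright_step_anti (θ₀ : ℝ) (n : ℕ) :
    Jleft θ₀ (n+1) + (2:ℝ)^(-((n+1:ℕ)):ℤ) ≤ Jleft θ₀ n + (2:ℝ)^(-(n:ℤ)) := by
  have hE := two_zpow_pos (-(n:ℤ))
  rw [Jleft_succ, zpow_neg_succ]; split_ifs <;> linarith

lemma Jleft_mono (θ₀ : ℝ) (m j : ℕ) : Jleft θ₀ m ≤ Jleft θ₀ (m+j) := by
  induction j with
  | zero => exact le_refl _
  | succ i ih => exact ih.trans (Jleft_step_mono θ₀ (m+i))

lemma Jright_anti (θ₀ : ℝ) (m j : ℕ) :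
    Jleft θ₀ (m+j) + (2:ℝ)^(-((m+j:ℕ)):ℤ) ≤ Jleft θ₀ m + (2:ℝ)^(-(m:ℤ)) := by
  induction j with
  | zero => exact le_refl _
  | succ i ih => exact (Jright_step_anti θ₀ (m+i)).trans ih

-- Q lemma, left side
lemma gainQ (θ₀ : ℝ) : ∀ j m : ℕ, Jleft θ₀ m + (2:ℝ)^(-(m:ℤ))/2 ≤ θ₀ →
    Jleft θ₀ m + (2 - 2/2^j) * (2:ℝ)^(-(m:ℤ))/4 ≤ Jleft θ₀ (m+j) := by
  intro j
  induction j with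
  | zero => intro m h; norm_num
  | succ j ih =>
    intro m h
    have hE := two_zpow_pos (-(m:ℤ))
    have h2j : (0:ℝ) < 2^j := by positivity
    have hstep := Jleft_succ θ₀ m
    by_cases hc : θ₀ < Jleft θ₀ m + 5 * (2:ℝ)^(-(m:ℤ)) / 8
    · rw [if_neg (by linarith), if_pos hc] at hstep
      have hrec := ih (m+1) (by rw [hstep, zpow_neg_succ]; linarith)
      rw [show m + (j+1) = (m+1) + j by ring] 
      rw [hstep, zpow_neg_succ] at hrec
      have key : (2 - 2/2^(j+1)) * (2:ℝ)^(-(m:ℤ))/4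
          = (2:ℝ)^(-(m:ℤ))/4 + (2 - 2/2^j) * ((2:ℝ)^(-(m:ℤ))/2)/4 := by
        rw [pow_succ]; field_simp; ring
      linarith
    · rw [if_neg (by linarith), if_neg hc] at hstep
      have hmono := Jleft_mono θ₀ (m+1) j
      rw [show m + (j+1) = (m+1) + j by ring]
      have hd : (0:ℝ) < 2/2^(j+1) := by positivity
      nlinarith [hstep, hmono]

-- M lemma, left side
lemma gainM (θ₀ : ℝ) : ∀ j m : ℕ, Jleft θ₀ m + (2:ℝ)^(-(m:ℤ))/4 ≤ θ₀ →
    Jleft θ₀ m + ((2:ℝ)^j - 2)/2^j * (2:ℝ)^(-(m:ℤ))/4 ≤ Jleft θ₀ (m+j) := by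
  intro j
  induction j with
  | zero => intro m h; have hE := two_zpow_pos (-(m:ℤ)); simp only [pow_zero, Nat.add_zero]; linarith
  | succ j ih =>
    intro m h
    have hE := two_zpow_pos (-(m:ℤ))
    have h2j : (0:ℝ) < 2^j := by positivity
    have hstep := Jleft_succ θ₀ m
    rw [show m + (j+1) = (m+1) + j by ring]
    by_cases hc1 : θ₀ < Jleft θ₀ m + 3 * (2:ℝ)^(-(m:ℤ)) / 8
    · rw [if_pos hc1] at hstep
      have hrec := gainQ θ₀ j (m+1) (by rw [hstep, zpow_neg_succ]; linarith)
      rw [hstep, zpow_neg_succ] at hrec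
      have key : ((2:ℝ)^(j+1) - 2)/2^(j+1) * (2:ℝ)^(-(m:ℤ))/4
          = (2 - 2/2^j) * ((2:ℝ)^(-(m:ℤ))/2)/4 := by
        rw [pow_succ]; field_simp
      linarith
    · by_cases hc2 : θ₀ < Jleft θ₀ m + 5 * (2:ℝ)^(-(m:ℤ)) / 8
      · rw [if_neg hc1, if_pos hc2] at hstep
        have hrec := ih (m+1) (by rw [hstep, zpow_neg_succ]; linarith)
        rw [hstep, zpow_neg_succ] at hrec
        have key : ((2:ℝ)^(j+1) - 2)/2^(j+1) * (2:ℝ)^(-(m:ℤ))/4 + (2:ℝ)^(-(m:ℤ))/8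
            = (2:ℝ)^(-(m:ℤ))/4 + ((2:ℝ)^j - 2)/2^j * ((2:ℝ)^(-(m:ℤ))/2)/4 := by
          rw [pow_succ]; field_simp; ring
        linarith
      · rw [if_neg hc1, if_neg hc2] at hstep
        have hmono := Jleft_mono θ₀ (m+1) j
        have hb : ((2:ℝ)^(j+1) - 2)/2^(j+1) ≤ 2 := by
          rw [div_le_iff₀ (by positivity)]
          nlinarith [pow_pos (show (0:ℝ)<2 by norm_num) (j+1)]
        nlinarith [hstep, hmono]

-- Q lemma, right side
lemma gainQ' (θ₀ : ℝ) : ∀ j m : ℕ, θ₀ ≤ Jleft θ₀ m + (2:ℝ)^(-(m:ℤ))/2 →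
    Jleft θ₀ (m+j) + (2:ℝ)^(-((m+j:ℕ)):ℤ)
      ≤ Jleft θ₀ m + (2:ℝ)^(-(m:ℤ)) - (2 - 2/2^j) * (2:ℝ)^(-(m:ℤ))/4 := by
  intro j
  induction j with
  | zero => intro m h; norm_num
  | succ j ih =>
    intro m h
    have hE := two_zpow_pos (-(m:ℤ))
    have h2j : (0:ℝ) < 2^j := by positivity
    have hstep := Jleft_succ θ₀ m
    rw [show m + (j+1) = (m+1) + j by ring]
    by_cases hc1 : θ₀ < Jleft θ₀ m + 3 * (2:ℝ)^(-(m:ℤ)) / 8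
    · rw [if_pos hc1] at hstep
      have hanti := Jright_anti θ₀ (m+1) j
      rw [hstep, zpow_neg_succ] at hanti
      have hd : (0:ℝ) < 2/2^(j+1) := by positivity
      nlinarith [hanti]
    · rw [if_neg hc1, if_pos (show θ₀ < Jleft θ₀ m + 5 * (2:ℝ)^(-(m:ℤ)) / 8 by linarith)] at hstep
      have hrec := ih (m+1) (by rw [hstep, zpow_neg_succ]; linarith)
      rw [hstep, zpow_neg_succ] at hrec
      have key : Jleft θ₀ m + (2:ℝ)^(-(m:ℤ)) - (2 - 2/2^(j+1)) * (2:ℝ)^(-(m:ℤ))/4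
          = Jleft θ₀ m + (2:ℝ)^(-(m:ℤ))/4 + (2:ℝ)^(-(m:ℤ))/2
            - (2 - 2/2^j) * ((2:ℝ)^(-(m:ℤ))/2)/4 := by
        rw [pow_succ]; field_simp; ring
      linarith

-- M lemma, right side
lemma gainM' (θ₀ : ℝ) : ∀ j m : ℕ, θ₀ ≤ Jleft θ₀ m + 3 * (2:ℝ)^(-(m:ℤ))/4 →
    Jleft θ₀ (m+j) + (2:ℝ)^(-((m+j:ℕ)):ℤ)
      ≤ Jleft θ₀ m + (2:ℝ)^(-(m:ℤ)) - ((2:ℝ)^j - 2)/2^j * (2:ℝ)^(-(m:ℤ))/4 := by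
  intro j
  induction j with
  | zero =>
    intro m h
    have hE := two_zpow_pos (-(m:ℤ))
    simp only [pow_zero, Nat.add_zero]
    linarith
  | succ j ih =>
    intro m h
    have hE := two_zpow_pos (-(m:ℤ))
    have h2j : (0:ℝ) < 2^j := by positivity
    have hstep := Jleft_succ θ₀ m
    rw [show m + (j+1) = (m+1) + j by ring]
    by_cases hc1 : θ₀ < Jleft θ₀ m + 3 * (2:ℝ)^(-(m:ℤ)) / 8
    · rw [if_pos hc1] at hstep
      have hanti := Jright_anti θ₀ (m+1) j
      rw [hstep, zpow_neg_succ] at hanti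
      have hb : ((2:ℝ)^(j+1) - 2)/2^(j+1) ≤ 2 := by
        rw [div_le_iff₀ (by positivity)]
        nlinarith [pow_pos (show (0:ℝ)<2 by norm_num) (j+1)]
      nlinarith [hanti]
    · by_cases hc2 : θ₀ < Jleft θ₀ m + 5 * (2:ℝ)^(-(m:ℤ)) / 8
      · rw [if_neg hc1, if_pos hc2] at hstep
        have hrec := ih (m+1) (by rw [hstep, zpow_neg_succ]; linarith)
        rw [hstep, zpow_neg_succ] at hrec
        have key : ((2:ℝ)^(j+1) - 2)/2^(j+1) * (2:ℝ)^(-(m:ℤ))/4 + (2:ℝ)^(-(m:ℤ))/8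
            = (2:ℝ)^(-(m:ℤ))/4 + ((2:ℝ)^j - 2)/2^j * ((2:ℝ)^(-(m:ℤ))/2)/4 := by
          rw [pow_succ]; field_simp; ring
        linarith
      · rw [if_neg hc1, if_neg hc2] at hstep
        have hrec := gainQ' θ₀ j (m+1) (by rw [hstep, zpow_neg_succ]; linarith)
        rw [hstep, zpow_neg_succ] at hrec
        have key : ((2:ℝ)^(j+1) - 2)/2^(j+1) * (2:ℝ)^(-(m:ℤ))/4
            = (2 - 2/2^j) * ((2:ℝ)^(-(m:ℤ))/2)/4 := by
          rw [pow_succ]; field_simp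
        linarith

lemma zpow_neg_sub (n c : ℕ) : (2:ℝ)^(-(n:ℤ) - c) = (2:ℝ)^(-(n:ℤ))/2^c := by
  rw [zpow_sub₀ (by norm_num : (2:ℝ) ≠ 0), zpow_natCast]

lemma Jleft_mem (θ₀ : ℝ) (h0 : 0 ≤ θ₀) (h1 : θ₀ ≤ 1) (k : ℕ) :
    Jleft θ₀ k ≤ θ₀ ∧ θ₀ ≤ Jleft θ₀ k + (2:ℝ)^(-(k:ℤ)) := by
  induction k with
  | zero => simpa [Jleft] using ⟨h0, h1⟩
  | succ n ih =>
    obtain ⟨hl, hr⟩ := ih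
    have hE := two_zpow_pos (-(n:ℤ))
    rw [Jleft_succ, zpow_neg_succ]
    split_ifs with h1' h2' <;> constructor <;> linarith

theorem interval_construction_properties (θ₀ : ℝ) (hθ₀ : θ₀ ∈ Set.Icc (0:ℝ) 1)
    (k : ℕ) (hk : 1 ≤ k) :
    MeasureTheory.volume (Jset θ₀ k) = ENNReal.ofReal ((2:ℝ) ^ (-(k:ℤ))) ∧
    (∀ θ ∈ Iset θ₀ k, |θ₀ - θ| ≥ (2:ℝ) ^ (-(k:ℤ) - 2)) ∧
    (∀ θ ∈ Iset θ₀ k, |θ - θ₀| ≤ (2:ℝ) ^ (-(k:ℤ) + 1)) ∧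
    (∀ a ∈ Jset θ₀ (k + 5), ∀ b ∈ Iset θ₀ k, |a - b| ≥ 15 * (2:ℝ) ^ (-(k:ℤ) - 6)) := by
  obtain ⟨h0, h1⟩ := hθ₀
  obtain ⟨n, rfl⟩ : ∃ n, k = n + 1 := ⟨k - 1, (Nat.succ_pred_eq_of_pos hk).symm⟩
  have hE := two_zpow_pos (-(n:ℤ))
  have hmem := Jleft_mem θ₀ h0 h1 n
  have hstep := Jleft_succ θ₀ n
  refine ⟨?_, ?_, ?_, ?_⟩
  · rw [Jset, Real.volume_Ico, add_sub_cancel_left]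
  · intro θ hθ
    simp only [Iset, Jset, Nat.add_sub_cancel, Set.mem_diff, Set.mem_Ico, not_and, not_lt] at hθ
    obtain ⟨⟨hθl, hθr⟩, hnot⟩ := hθ
    rw [zpow_neg_succ] at hnot
    rw [show (-(↑(n+1):ℤ) - 2) = -(n:ℤ) - (3:ℕ) by push_cast; ring, zpow_neg_sub,
      show ((2:ℝ)^(3:ℕ)) = 8 by norm_num]
    rcases le_or_gt (Jleft θ₀ (n+1)) θ with hge | hlt
    · have h2 := hnot hge
      split_ifs at hstep with hA hB <;>
        rcases abs_cases (θ₀ - θ) with ⟨he, _⟩ | ⟨he, _⟩ <;> rw [he] <;> linarith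
    · split_ifs at hstep with hA hB <;>
        rcases abs_cases (θ₀ - θ) with ⟨he, _⟩ | ⟨he, _⟩ <;> rw [he] <;> linarith
  · intro θ hθ
    simp only [Iset, Jset, Nat.add_sub_cancel, Set.mem_diff, Set.mem_Ico, not_and, not_lt] at hθ
    obtain ⟨⟨hθl, hθr⟩, -⟩ := hθ
    rw [show (-(↑(n+1):ℤ) + 1) = -(n:ℤ) by push_cast; ring]
    rcases abs_cases (θ - θ₀) with ⟨he, _⟩ | ⟨he, _⟩ <;> rw [he] <;>
      [linarith [hmem.1]; linarith [hmem.2]]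
  · intro a ha b hb
    simp only [Jset, Set.mem_Ico] at ha
    obtain ⟨hal, har⟩ := ha
    simp only [Iset, Jset, Nat.add_sub_cancel, Set.mem_diff, Set.mem_Ico, not_and, not_lt] at hb
    obtain ⟨⟨hbl, hbr⟩, hbnot⟩ := hb
    rw [show (-(↑(n+1):ℤ) - 6) = -(n:ℤ) - (7:ℕ) by push_cast; ring, zpow_neg_sub,
      show ((2:ℝ)^(7:ℕ)) = 128 by norm_num]
    rcases le_or_gt (Jleft θ₀ (n+1)) b with hge | hlt
    · -- b on the right of J_{n+1}
      have h2 := hbnot hge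
      rw [zpow_neg_succ] at h2
      have hhyp : θ₀ ≤ Jleft θ₀ (n+1) + 3 * (2:ℝ)^(-(↑(n+1):ℕ):ℤ)/4 := by
        rw [zpow_neg_succ]
        split_ifs at hstep with hA hB <;> linarith
      have hM := gainM' θ₀ 5 (n+1) hhyp
      rw [zpow_neg_succ n] at hM
      have hco : ((2:ℝ)^5 - 2)/2^5 * ((2:ℝ)^(-(n:ℤ))/2)/4 = 15 * (2:ℝ)^(-(n:ℤ))/128 := by
        norm_num; ring
      rw [hco] at hM
      rcases abs_cases (a - b) with ⟨he, _⟩ | ⟨he, _⟩ <;> rw [he] <;>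
        [linarith [hM, h2, har]; linarith [hM, h2, har]]
    · -- b on the left of J_{n+1}
      have hhyp : Jleft θ₀ (n+1) + (2:ℝ)^(-(↑(n+1):ℕ):ℤ)/4 ≤ θ₀ := by
        rw [zpow_neg_succ]
        split_ifs at hstep with hA hB <;> linarith
      have hM := gainM θ₀ 5 (n+1) hhyp
      rw [zpow_neg_succ n] at hM
      have hco : ((2:ℝ)^5 - 2)/2^5 * ((2:ℝ)^(-(n:ℤ))/2)/4 = 15 * (2:ℝ)^(-(n:ℤ))/128 := by
        norm_num; ring
      rw [hco] at hM
      rcases abs_cases (a - b) with ⟨he, _⟩ | ⟨he, _⟩ <;> rw [he] <;>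
        [linarith [hM, hal]; linarith [hM, hal]]
end

section
/- Let k₀ = max{0, ⌊−log₂θ₀ + log₂(3/4)⌋}, 1 ≤ k ≤ k₀ − 5, and k₁ = k + ⌈log₂(k₀ − k − 3)⌉ + 2. If θ ≥ 2^{−k} and 0 < α ≤ 2^{−k₁}, then the extended Kullback-Leibler divergence satisfies D^α(θ₀‖θ) ≥ 2^{−k−4}. -/
/-!
For `θ ≥ α` the map `θ ↦ D^α(θ₀‖θ)` is nondecreasing (its derivative is `(θ - α) / (θ (1 - θ))`),
so it suffices to bound it at `t = 2^(-k)`. There `θ₀ ≤ t / 32`, so the second term is at least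
`(1 - α)(t - θ₀) ≈ t`, while `t / θ₀ ≤ 2^(k₀ - k + 2)` and the choice of `k₁` give
`α ln (t / θ₀) ≤ (7/8) t ln 2 < 0.61 t`.
-/

/-- Extended Kullback-Leibler divergence `D^α(θ₀‖θ) = α ln(θ₀/θ) + (1−α) ln((1−θ₀)/(1−θ))`. -/
noncomputable def extKL (α θ₀ θ : ℝ) : ℝ :=
  α * Real.log (θ₀ / θ) + (1 - α) * Real.log ((1 - θ₀) / (1 - θ))

open Real

theorem extKL_monotoneOn {α θ₀ : ℝ} (hα : 0 < α) (hθ₀0 : θ₀ ≠ 0) (hθ₀1 : θ₀ ≠ 1) :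
    MonotoneOn (extKL α θ₀) (Set.Ico α 1) := by
  rintro t ⟨hαt, ht1⟩ θ ⟨-, hθ1⟩ htθ
  have ht : 0 < t := hα.trans_le hαt
  have hθ : 0 < θ := ht.trans_le htθ
  have h1t : 0 < 1 - t := sub_pos.2 ht1
  have hdiff : extKL α θ₀ θ - extKL α θ₀ t =
      (1 - α) * log ((1 - t) / (1 - θ)) - α * log (θ / t) := by
    simp only [extKL]
    rw [log_div hθ₀0 (by linarith), log_div hθ₀0 ht.ne', log_div (sub_ne_zero.2 hθ₀1.symm)
      (by linarith), log_div (sub_ne_zero.2 hθ₀1.symm) h1t.ne', log_div (by linarith) ht.ne',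
      log_div h1t.ne' (by linarith)]
    ring
  have hup : α * log (θ / t) ≤ α * ((θ - t) / t) := by
    gcongr
    calc log (θ / t) ≤ θ / t - 1 := log_le_sub_one_of_pos (by positivity)
      _ = (θ - t) / t := by field_simp
  have hlow : (1 - α) * ((θ - t) / (1 - t)) ≤ (1 - α) * log ((1 - t) / (1 - θ)) := by
    gcongr
    · linarith
    calc (θ - t) / (1 - t) = 1 - ((1 - t) / (1 - θ))⁻¹ := by field_simp; ring
      _ ≤ log ((1 - t) / (1 - θ)) := one_sub_inv_le_log_of_pos (div_pos h1t (by linarith))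
  have hratio : α / t ≤ (1 - α) / (1 - t) := by
    rw [div_le_div_iff₀ ht h1t]
    nlinarith
  have hslopes : α * ((θ - t) / t) ≤ (1 - α) * ((θ - t) / (1 - t)) :=
    calc α * ((θ - t) / t) = (θ - t) * (α / t) := by ring
      _ ≤ (θ - t) * ((1 - α) / (1 - t)) := mul_le_mul_of_nonneg_left hratio (by linarith)
      _ = (1 - α) * ((θ - t) / (1 - t)) := by ring
  linarith

theorem le_extKL_of_le {α θ₀ t : ℝ} (hα1 : α ≤ 1) (hθ₀ : 0 < θ₀) (hθ₀t : θ₀ ≤ t)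
    (ht : t < 1) : (1 - α) * (t - θ₀) - α * log (t / θ₀) ≤ extKL α θ₀ t := by
  have h1θ₀ : 0 < 1 - θ₀ := by linarith
  have hlog : t - θ₀ ≤ log ((1 - θ₀) / (1 - t)) :=
    calc t - θ₀ ≤ (t - θ₀) / (1 - θ₀) := le_div_self (by linarith) h1θ₀ (by linarith)
      _ = 1 - ((1 - θ₀) / (1 - t))⁻¹ := by field_simp; ring
      _ ≤ log ((1 - θ₀) / (1 - t)) := one_sub_inv_le_log_of_pos (div_pos h1θ₀ (by linarith))
  rw [extKL, ← neg_neg (log (θ₀ / t)), ← log_inv, inv_div]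
  nlinarith

theorem div_sixteen_le_extKL {α θ₀ t m : ℝ} (hα : 0 ≤ α) (hθ₀ : 0 < θ₀)
    (hθ₀t : θ₀ ≤ t / 32) (ht : t ≤ 1 / 2) (hm : 2 ≤ m) (hαm : α * m ≤ t / 4)
    (hlog : log (t / θ₀) ≤ (m + 5) * log 2) : t / 16 ≤ extKL α θ₀ t := by
  have hα8 : α ≤ t / 8 := by nlinarith
  have hαlog : α * log (t / θ₀) ≤ 7 / 8 * t * log 2 :=
    calc α * log (t / θ₀) ≤ α * ((m + 5) * log 2) := mul_le_mul_of_nonneg_left hlog hα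
      _ = (α * m + 5 * α) * log 2 := by ring
      _ ≤ 7 / 8 * t * log 2 := by gcongr; linarith
  have hbase : (1 - α) * (t - θ₀) - α * log (t / θ₀) ≤ extKL α θ₀ t :=
    le_extKL_of_le (by linarith) hθ₀ (by linarith) (by linarith)
  nlinarith [log_two_lt_d9, mul_le_mul_of_nonneg_left hα8 (by linarith : 0 ≤ t - θ₀)]

theorem two_zpow_sub_four_le_extKL {α θ₀ : ℝ} {k K : ℤ} (hα : 0 ≤ α) (hθ₀ : 0 < θ₀) (hk : 1 ≤ k)
    (hkK : k + 5 ≤ K) (hKθ₀ : 2 ^ K * θ₀ ≤ 3 / 4) (hθ₀K : 3 / 4 < 2 ^ (K + 1) * θ₀)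
    (hαK : α * (K - k - 3) ≤ 2 ^ (-k - 2)) :
    (2:ℝ) ^ (-k - 4) ≤ extKL α θ₀ (2 ^ (-k)) := by
  have hm : (2:ℝ) ≤ K - k - 3 := by exact_mod_cast (by omega : (2:ℤ) ≤ K - k - 3)
  have htk : (2:ℝ) ^ (-k) * 2 ^ k = 1 := by rw [← zpow_add₀ two_ne_zero, neg_add_cancel, zpow_zero]
  have hexp_t4 : (2:ℝ) ^ (-k - 2) = 2 ^ (-k) / 4 := by rw [zpow_sub₀ two_ne_zero]; norm_num
  have hexp_t16 : (2:ℝ) ^ (-k - 4) = 2 ^ (-k) / 16 := by rw [zpow_sub₀ two_ne_zero]; norm_num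
  have hexp_θ₀ : (2:ℝ) ^ (K - k + 2) = 4 * 2 ^ K * 2 ^ (-k) := by
    rw [zpow_add₀ two_ne_zero, sub_eq_add_neg, zpow_add₀ two_ne_zero]; ring
  have h2K : 2 ^ k * 32 ≤ (2:ℝ) ^ K :=
    calc 2 ^ k * 32 = (2:ℝ) ^ (k + 5) := by rw [zpow_add₀ two_ne_zero]; norm_num
      _ ≤ 2 ^ K := zpow_le_zpow_right₀ one_le_two hkK
  have ht_half : (2:ℝ) ^ (-k) ≤ 1 / 2 :=
    calc (2:ℝ) ^ (-k) ≤ 2 ^ (-1 : ℤ) := zpow_le_zpow_right₀ one_le_two (by omega)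
      _ = 1 / 2 := by norm_num
  rw [hexp_t4] at hαK
  rw [hexp_t16]
  set t := (2:ℝ) ^ (-k)
  have ht0 : 0 < t := by positivity
  have hθ₀t : θ₀ ≤ t / 32 := by
    have h32 : 2 ^ k * 32 * θ₀ ≤ 3 / 4 := by nlinarith
    calc θ₀ = t * (2 ^ k * 32 * θ₀) / 32 := by rw [← mul_assoc, ← mul_assoc, htk]; ring
      _ ≤ t * (3 / 4) / 32 := by gcongr
      _ ≤ t / 32 := by linarith
  have hlog : log (t / θ₀) ≤ ((K - k - 3 : ℝ) + 5) * log 2 := by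
    have hratio : t / θ₀ ≤ 2 ^ (K - k + 2) := by
      rw [zpow_add_one₀ two_ne_zero] at hθ₀K
      rw [div_le_iff₀ hθ₀, hexp_θ₀]
      nlinarith
    calc log (t / θ₀) ≤ log (2 ^ (K - k + 2)) := log_le_log (by positivity) hratio
      _ = ((K - k - 3 : ℝ) + 5) * log 2 := by rw [log_zpow]; push_cast; ring
  exact div_sixteen_le_extKL hα hθ₀ hθ₀t ht_half hm hαK hlog

theorem mul_le_two_zpow_of_le_two_zpow_ceil_logb {α x : ℝ} {k : ℤ} (hx : 0 ≤ x)
    (hα : α ≤ 2 ^ (-(k + ⌈logb 2 x⌉ + 2))) : α * x ≤ 2 ^ (-k - 2) := by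
  have hx_le : x ≤ 2 ^ ⌈logb 2 x⌉ := by
    rw [show ⌈logb 2 x⌉ = Int.clog 2 x by simpa using ceil_logb_natCast (b := 2) hx]
    exact_mod_cast Int.self_le_zpow_clog (R := ℝ) (b := 2) one_lt_two x
  calc α * x ≤ 2 ^ (-(k + ⌈logb 2 x⌉ + 2)) * 2 ^ ⌈logb 2 x⌉ :=
        mul_le_mul hα hx_le hx (by positivity)
    _ = 2 ^ (-k - 2) := by rw [← zpow_add₀ two_ne_zero]; ring_nf

theorem extKL_lower_bound_lsteps (θ₀ θ α : ℝ)
    (hθ₀ : θ₀ ∈ Set.Ioc (0:ℝ) (1/2)) (hθ : θ ∈ Set.Ioo (0:ℝ) 1)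
    (k : ℤ) (hk1 : 1 ≤ k)
    (hk2 : k ≤ max 0 ⌊Real.logb 2 (3/4) - Real.logb 2 θ₀⌋ - 5)
    (hθk : θ ≥ (2:ℝ) ^ (-k))
    (hα0 : 0 < α)
    (hα : α ≤ (2:ℝ) ^ (-(k + ⌈Real.logb 2 ((max 0 ⌊Real.logb 2 (3/4) - Real.logb 2 θ₀⌋ : ℤ) - k - 3 : ℝ)⌉ + 2))) :
    extKL α θ₀ θ ≥ (2:ℝ) ^ (-k - 4) := by
  have hθ₀pos : 0 < θ₀ := hθ₀.1
  rw [← logb_div (by norm_num) hθ₀pos.ne', show ⌊logb 2 (3 / 4 / θ₀)⌋ = Int.log 2 (3 / 4 / θ₀) by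
    simpa using floor_logb_natCast (b := 2) (r := 3 / 4 / θ₀) (by positivity)] at hk2 hα
  set K := Int.log 2 (3 / 4 / θ₀)
  have hkK : k + 5 ≤ K := by omega
  rw [max_eq_right (by omega : (0:ℤ) ≤ K)] at hα
  have hKθ₀ : 2 ^ K * θ₀ ≤ 3 / 4 := by
    rw [← le_div_iff₀ hθ₀pos]
    exact_mod_cast Int.zpow_log_le_self (R := ℝ) (b := 2) one_lt_two (by positivity)
  have hθ₀K : 3 / 4 < 2 ^ (K + 1) * θ₀ := by
    rw [← div_lt_iff₀ hθ₀pos]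
    exact_mod_cast Int.lt_zpow_succ_log_self (R := ℝ) (b := 2) one_lt_two (3 / 4 / θ₀)
  have hm : (2:ℝ) ≤ K - k - 3 := by exact_mod_cast (by omega : (2:ℤ) ≤ K - k - 3)
  have hαK := mul_le_two_zpow_of_le_two_zpow_ceil_logb (by linarith) hα
  have hαt : α ≤ 2 ^ (-k) := by
    have : (2:ℝ) ^ (-k - 2) ≤ 2 ^ (-k) := zpow_le_zpow_right₀ one_le_two (by omega)
    nlinarith
  calc (2:ℝ) ^ (-k - 4) ≤ extKL α θ₀ (2 ^ (-k)) :=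
        two_zpow_sub_four_le_extKL hα0.le hθ₀pos hk1 hkK hKθ₀ hθ₀K hαK
    _ ≤ extKL α θ₀ θ := extKL_monotoneOn hα0 hθ₀pos.ne' (hθ₀.2.trans_lt (by norm_num)).ne
          ⟨hαt, hθk.trans_lt hθ.2⟩ ⟨hαt.trans hθk, hθ.2⟩ hθk
end
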